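/- arXiv:2310.09220 — 4 statements merged into one kernel-verified Lean document; each statement's English description precedes it below -/
import Mathlib

section
/- If D is a univalent 2-sided displayed category over univalent categories C₁ and C₂, then the total category ∫D (whose objects are triples (x₁ : C₁, x₂ : C₂, x̄ : D(x₁,x₂)) and whose morphisms from (x₁,x₂,x̄) to (y₁,y₂,ȳ) are triples (f₁ : x₁ → y₁, f₂ : x₂ → y₂, f̄ : x̄ →[f₁,f₂] ȳ)) is a univalent category. -/
open CategoryTheory

universe w w' v v₁ v₂ v₃ v₄ u u₁ u₂ u₃ u₄

/-- A category is *univalent* if, for all objects `x` and `y`, the canonical map sending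
an identity `p : x = y` to an isomorphism `x ≅ y` is an equivalence of types. -/
def IsUnivalentCat (C : Type u) [Category.{v} C] : Prop :=
  ∀ x y : C, Function.Bijective (fun p : x = y => eqToIso p)

/-- A 2-sided displayed category over categories `C₁` and `C₂`. -/
structure TwoSidedDispCat (C₁ : Type u₁) (C₂ : Type u₂)
    [Category.{v₁} C₁] [Category.{v₂} C₂] where
  /-- displayed objects over a pair of objects -/
  Ob : C₁ → C₂ → Type w
  /-- displayed morphisms over a pair of morphisms -/
  Mor : ∀ {x₁ y₁ : C₁} {x₂ y₂ : C₂},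
    Ob x₁ x₂ → Ob y₁ y₂ → (x₁ ⟶ y₁) → (x₂ ⟶ y₂) → Type w'
  /-- identity displayed morphisms -/
  id : ∀ {x₁ x₂} (x : Ob x₁ x₂), Mor x x (𝟙 x₁) (𝟙 x₂)
  /-- composition of displayed morphisms -/
  comp : ∀ {x₁ y₁ z₁ : C₁} {x₂ y₂ z₂ : C₂} {x : Ob x₁ x₂} {y : Ob y₁ y₂} {z : Ob z₁ z₂}
    {f₁ : x₁ ⟶ y₁} {f₂ : x₂ ⟶ y₂} {g₁ : y₁ ⟶ z₁} {g₂ : y₂ ⟶ z₂},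
    Mor x y f₁ f₂ → Mor y z g₁ g₂ → Mor x z (f₁ ≫ g₁) (f₂ ≫ g₂)
  /-- left unitality, as a dependent equality over the unit laws of `C₁` and `C₂` -/
  id_comp : ∀ {x₁ y₁ x₂ y₂} {x : Ob x₁ x₂} {y : Ob y₁ y₂} {f₁ : x₁ ⟶ y₁} {f₂ : x₂ ⟶ y₂}
    (f : Mor x y f₁ f₂), HEq (comp (id x) f) f
  /-- right unitality, as a dependent equality -/
  comp_id : ∀ {x₁ y₁ x₂ y₂} {x : Ob x₁ x₂} {y : Ob y₁ y₂} {f₁ : x₁ ⟶ y₁} {f₂ : x₂ ⟶ y₂}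
    (f : Mor x y f₁ f₂), HEq (comp f (id y)) f
  /-- associativity, as a dependent equality -/
  assoc : ∀ {w₁ x₁ y₁ z₁ : C₁} {w₂ x₂ y₂ z₂ : C₂}
    {w : Ob w₁ w₂} {x : Ob x₁ x₂} {y : Ob y₁ y₂} {z : Ob z₁ z₂}
    {f₁ : w₁ ⟶ x₁} {f₂ : w₂ ⟶ x₂} {g₁ : x₁ ⟶ y₁} {g₂ : x₂ ⟶ y₂}
    {h₁ : y₁ ⟶ z₁} {h₂ : y₂ ⟶ z₂}
    (f : Mor w x f₁ f₂) (g : Mor x y g₁ g₂) (h : Mor y z h₁ h₂),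
    HEq (comp f (comp g h)) (comp (comp f g) h)

namespace TwoSidedDispCat

variable {C₁ : Type u₁} {C₂ : Type u₂} [Category.{v₁} C₁] [Category.{v₂} C₂]

/-- An isomorphism structure on a displayed morphism lying over a pair of isomorphisms:
a displayed inverse over the inverses, such that both composites are equal to identity
displayed morphisms up to transport (here: dependent equality, `HEq`). -/
structure IsoStructure (D : TwoSidedDispCat.{w, w'} C₁ C₂) {x₁ y₁ : C₁} {x₂ y₂ : C₂}
    (f₁ : x₁ ≅ y₁) (f₂ : x₂ ≅ y₂) {x : D.Ob x₁ x₂} {y : D.Ob y₁ y₂}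
    (f : D.Mor x y f₁.hom f₂.hom) where
  inv : D.Mor y x f₁.inv f₂.inv
  hom_inv : HEq (D.comp f inv) (D.id x)
  inv_hom : HEq (D.comp inv f) (D.id y)

/-- `f` is an isomorphism over the isomorphisms `f₁` and `f₂`. -/
def IsIso (D : TwoSidedDispCat.{w, w'} C₁ C₂) {x₁ y₁ : C₁} {x₂ y₂ : C₂}
    (f₁ : x₁ ≅ y₁) (f₂ : x₂ ≅ y₂) {x : D.Ob x₁ x₂} {y : D.Ob y₁ y₂}
    (f : D.Mor x y f₁.hom f₂.hom) : Prop :=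
  Nonempty (D.IsoStructure f₁ f₂ f)

/-- The identity displayed morphism is an isomorphism. -/
def idIso (D : TwoSidedDispCat.{w, w'} C₁ C₂) {x₁ : C₁} {x₂ : C₂} (x : D.Ob x₁ x₂) :
    D.IsoStructure (Iso.refl x₁) (Iso.refl x₂) (D.id x) where
  inv := D.id x
  hom_inv := D.id_comp _
  inv_hom := D.id_comp _

/-- Displayed isomorphisms between displayed objects over the same pair of objects,
lying over the identity isomorphisms. -/
def DispIso (D : TwoSidedDispCat.{w, w'} C₁ C₂) {x₁ : C₁} {x₂ : C₂}
    (x y : D.Ob x₁ x₂) : Type w' :=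
  Σ f : D.Mor x y (𝟙 x₁) (𝟙 x₂), D.IsoStructure (Iso.refl x₁) (Iso.refl x₂) f

/-- The canonical map sending identities of displayed objects to displayed isomorphisms. -/
def idToDispIso (D : TwoSidedDispCat.{w, w'} C₁ C₂) {x₁ : C₁} {x₂ : C₂}
    (x y : D.Ob x₁ x₂) (p : x = y) : D.DispIso x y := by
  subst p; exact ⟨D.id x, D.idIso x⟩

/-- A 2-sided displayed category is *univalent* if the canonical map from identities of
displayed objects to displayed isomorphisms over the identities is an equivalence of types. -/
def IsUnivalent (D : TwoSidedDispCat.{w, w'} C₁ C₂) : Prop :=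
  ∀ {x₁ : C₁} {x₂ : C₂} (x y : D.Ob x₁ x₂), Function.Bijective (D.idToDispIso x y)

end TwoSidedDispCat

namespace TwoSidedDispCat

variable {C₁ : Type u₁} {C₂ : Type u₂} [Category.{v₁} C₁] [Category.{v₂} C₂]

/-- Objects of the total category of a 2-sided displayed category: triples of an object of
`C₁`, an object of `C₂`, and a displayed object over them. -/
structure Total (D : TwoSidedDispCat.{w, w'} C₁ C₂) : Type (max u₁ u₂ w) where
  fst : C₁
  snd : C₂
  ob : D.Ob fst snd

/-- Morphisms of the total category: triples of a morphism in `C₁`, a morphism in `C₂`,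
and a displayed morphism over them. -/
structure TotalHom (D : TwoSidedDispCat.{w, w'} C₁ C₂) (X Y : D.Total) :
    Type (max v₁ v₂ w') where
  fst : X.fst ⟶ Y.fst
  snd : X.snd ⟶ Y.snd
  mor : D.Mor X.ob Y.ob fst snd

theorem TotalHom.ext' {D : TwoSidedDispCat.{w, w'} C₁ C₂} {X Y : D.Total}
    {f g : D.TotalHom X Y} (h₁ : f.fst = g.fst) (h₂ : f.snd = g.snd)
    (h : HEq f.mor g.mor) : f = g := by
  cases f; cases g
  cases h₁; cases h₂
  cases h
  rfl

/-- The total category of a 2-sided displayed category. -/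
instance totalCategory (D : TwoSidedDispCat.{w, w'} C₁ C₂) : Category D.Total where
  Hom := D.TotalHom
  id X := ⟨𝟙 X.fst, 𝟙 X.snd, D.id X.ob⟩
  comp f g := ⟨f.fst ≫ g.fst, f.snd ≫ g.snd, D.comp f.mor g.mor⟩
  id_comp f := TotalHom.ext' (Category.id_comp _) (Category.id_comp _) (D.id_comp _)
  comp_id f := TotalHom.ext' (Category.comp_id _) (Category.comp_id _) (D.comp_id _)
  assoc f g h := TotalHom.ext' (Category.assoc _ _ _) (Category.assoc _ _ _)
    (D.assoc f.mor g.mor h.mor).symm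

end TwoSidedDispCat

private theorem TotalHom_mor_heq {C₁ : Type u₁} {C₂ : Type u₂} [Category.{v₁} C₁]
    [Category.{v₂} C₂] {D : TwoSidedDispCat.{w, w'} C₁ C₂} {X Y : D.Total}
    {f g : D.TotalHom X Y} (h : f = g) : HEq f.mor g.mor := by subst h; rfl

/-- If `D` is a univalent 2-sided displayed category over univalent
categories `C₁` and `C₂`, then the total category of `D` is univalent. -/
theorem is_univalent_total_twosided_disp_category
    {C₁ : Type u₁} {C₂ : Type u₂} [Category.{v₁} C₁] [Category.{v₂} C₂]
    (D : TwoSidedDispCat.{w, w'} C₁ C₂)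
    (h₁ : IsUnivalentCat C₁) (h₂ : IsUnivalentCat C₂) (hD : D.IsUnivalent) :
    IsUnivalentCat D.Total := by
  intro X Y
  refine ⟨fun p q _ => Subsingleton.elim p q, ?_⟩
  intro e
  obtain ⟨x₁, x₂, x⟩ := X
  obtain ⟨y₁, y₂, y⟩ := Y
  obtain ⟨⟨f1, f2, fm⟩, ⟨g1, g2, gm⟩, hhi, hih⟩ := e
  -- component isomorphisms
  obtain ⟨p₁, hp₁⟩ := (h₁ x₁ y₁).2 ⟨f1, g1, congrArg TwoSidedDispCat.TotalHom.fst hhi,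
    congrArg TwoSidedDispCat.TotalHom.fst hih⟩
  obtain ⟨p₂, hp₂⟩ := (h₂ x₂ y₂).2 ⟨f2, g2, congrArg TwoSidedDispCat.TotalHom.snd hhi,
    congrArg TwoSidedDispCat.TotalHom.snd hih⟩
  subst p₁
  subst p₂
  have hf1 : f1 = 𝟙 x₁ := by have := congrArg Iso.hom hp₁; simpa using this.symm
  have hg1 : g1 = 𝟙 x₁ := by have := congrArg Iso.inv hp₁; simpa using this.symm
  have hf2 : f2 = 𝟙 x₂ := by have := congrArg Iso.hom hp₂; simpa using this.symm
  have hg2 : g2 = 𝟙 x₂ := by have := congrArg Iso.inv hp₂; simpa using this.symm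
  subst hf1; subst hg1; subst hf2; subst hg2
  have homInv : HEq (D.comp fm gm) (D.id x) := TotalHom_mor_heq hhi
  have invHom : HEq (D.comp gm fm) (D.id y) := TotalHom_mor_heq hih
  obtain ⟨q, hq⟩ := (hD x y).2 ⟨fm, gm, homInv, invHom⟩
  subst q
  have hm : D.id x = fm := congrArg Sigma.fst hq
  subst hm
  exact ⟨rfl, Iso.ext rfl⟩
end

section
/- For every univalent category C, the 2-sided displayed category Span(C) over C and C — whose displayed objects over x and y are spans x ← z → y in C, and whose displayed morphisms from (x₁ ←φ₁ z₁ →ψ₁ y₁) to (x₂ ←φ₂ z₂ →ψ₂ y₂) over f : x₁ → x₂ and g : y₁ → y₂ are morphisms h : z₁ → z₂ with h·φ₂ = φ₁·f and h·ψ₂ = ψ₁·g — is a univalent 2-sided displayed category. -/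
open CategoryTheory

universe w w' v v₁ v₂ v₃ v₄ u u₁ u₂ u₃ u₄

/-- A span from `x` to `y` in `C`: an object `mid` together with legs `mid ⟶ x` and
`mid ⟶ y`. -/
structure SpanOb (C : Type u) [Category.{v} C] (x y : C) : Type (max u v) where
  mid : C
  left : mid ⟶ x
  right : mid ⟶ y

/-- A morphism of spans over `f : x₁ ⟶ x₂` and `g : y₁ ⟶ y₂`: a morphism between the middle
objects making the two evident squares commute. -/
structure SpanMor {C : Type u} [Category.{v} C] {x₁ y₁ x₂ y₂ : C}
    (s : SpanOb C x₁ y₁) (t : SpanOb C x₂ y₂) (f : x₁ ⟶ x₂) (g : y₁ ⟶ y₂) :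
    Type v where
  hom : s.mid ⟶ t.mid
  wl : hom ≫ t.left = s.left ≫ f
  wr : hom ≫ t.right = s.right ≫ g

theorem SpanMor.ext' {C : Type u} [Category.{v} C] {x₁ y₁ x₂ y₂ : C}
    {s : SpanOb C x₁ y₁} {t : SpanOb C x₂ y₂} {f : x₁ ⟶ x₂} {g : y₁ ⟶ y₂}
    {m m' : SpanMor s t f g} (h : m.hom = m'.hom) : m = m' := by
  cases m; cases m'; cases h; rfl

theorem SpanMor.heq' {C : Type u} [Category.{v} C] {x₁ y₁ x₂ y₂ : C}
    {s : SpanOb C x₁ y₁} {t : SpanOb C x₂ y₂} {f f' : x₁ ⟶ x₂} {g g' : y₁ ⟶ y₂}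
    (hf : f = f') (hg : g = g') {m : SpanMor s t f g} {m' : SpanMor s t f' g'}
    (h : m.hom = m'.hom) : HEq m m' := by
  subst hf; subst hg; exact heq_of_eq (SpanMor.ext' h)

/-- The 2-sided displayed category `Span C` over `C` and `C`: displayed objects over `x`
and `y` are spans from `x` to `y`, and displayed morphisms over `f` and `g` are morphisms
of spans. -/
def spanTwoSidedDispCat (C : Type u) [Category.{v} C] :
    TwoSidedDispCat.{max u v, v} C C where
  Ob x y := SpanOb C x y
  Mor s t f g := SpanMor s t f g
  id s := ⟨𝟙 s.mid, by simp, by simp⟩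
  comp m n :=
    ⟨m.hom ≫ n.hom, by rw [Category.assoc, n.wl, ← Category.assoc, m.wl, Category.assoc],
      by rw [Category.assoc, n.wr, ← Category.assoc, m.wr, Category.assoc]⟩
  id_comp m := SpanMor.heq' (Category.id_comp _) (Category.id_comp _) (Category.id_comp _)
  comp_id m := SpanMor.heq' (Category.comp_id _) (Category.comp_id _) (Category.comp_id _)
  assoc m n k := SpanMor.heq' (Category.assoc _ _ _).symm (Category.assoc _ _ _).symm
    (Category.assoc _ _ _).symm

theorem spanMor_hom_congr {C : Type u} [Category.{v} C] {x₁ y₁ x₂ y₂ : C}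
    {s : SpanOb C x₁ y₁} {t : SpanOb C x₂ y₂} {f f' : x₁ ⟶ x₂} {g g' : y₁ ⟶ y₂}
    (hf : f = f') (hg : g = g') {m : SpanMor s t f g} {m' : SpanMor s t f' g'}
    (h : HEq m m') : m.hom = m'.hom := by
  subst hf; subst hg; rw [eq_of_heq h]

/-- For every univalent category `C`, the 2-sided displayed category
`Span C` of spans in `C` is univalent. -/
theorem spans_twosided_disp_cat_is_univalent (C : Type u) [Category.{v} C]
    (hC : IsUnivalentCat C) :
    (spanTwoSidedDispCat C).IsUnivalent := by
  intro x₁ x₂ s t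
  constructor
  · intro p q _; exact Subsingleton.elim p q
  · rintro ⟨f, ⟨finv, hi, ih⟩⟩
    -- extract equations on middle morphisms
    have h1 : f.hom ≫ finv.hom = 𝟙 s.mid :=
      spanMor_hom_congr (Category.id_comp _) (Category.id_comp _) hi
    have h2 : finv.hom ≫ f.hom = 𝟙 t.mid :=
      spanMor_hom_congr (Category.id_comp _) (Category.id_comp _) ih
    set i : s.mid ≅ t.mid := ⟨f.hom, finv.hom, h1, h2⟩ with hidef
    obtain ⟨p, hp⟩ := (hC s.mid t.mid).2 i
    have hhom : eqToHom p = f.hom := by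
      have := congrArg Iso.hom hp; simpa [eqToIso] using this
    have hl : eqToHom p ≫ t.left = s.left := by
      rw [hhom]; simpa using f.wl
    have hr : eqToHom p ≫ t.right = s.right := by
      rw [hhom]; simpa using f.wr
    obtain ⟨m, l, r⟩ := s
    obtain ⟨m', l', r'⟩ := t
    dsimp at p
    subst p
    simp only [eqToHom_refl, Category.id_comp] at hl hr hhom
    subst hl; subst hr
    refine ⟨rfl, ?_⟩
    have hf : (spanTwoSidedDispCat C).id (⟨m, l', r'⟩ : SpanOb C x₁ x₂) = f :=
      SpanMor.ext' (by exact hhom)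
    subst hf
    have hfinv : (spanTwoSidedDispCat C).id (⟨m, l', r'⟩ : SpanOb C x₁ x₂) = finv := by
      refine SpanMor.ext' ?_
      have : finv.hom ≫ 𝟙 m = 𝟙 m := h2
      exact (by simpa using this.symm : (𝟙 m : m ⟶ m) = finv.hom)
    subst hfinv
    rfl
end

section
/- For every functor L : C₁ → C₂ between univalent categories, the 2-sided displayed category StructCospan(L) over C₁ and C₁ — whose displayed objects over x and y are structured cospans L(x) → z ← L(y) with z : C₂, and whose displayed morphisms from (L(x₁) →φ₁ z₁ ←ψ₁ L(y₁)) to (L(x₂) →φ₂ z₂ ←ψ₂ L(y₂)) over f : x₁ → x₂ and g : y₁ → y₂ are morphisms h : z₁ → z₂ with L(f)·φ₂ = φ₁·h and L(g)·ψ₂ = ψ₁·h — is a univalent 2-sided displayed category. -/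
open CategoryTheory

universe w w' v v₁ v₂ v₃ v₄ u u₁ u₂ u₃ u₄

/-- A structured cospan from `x : C₁` to `y : C₁` relative to `L : C₁ ⥤ C₂`: an object
`mid : C₂` together with morphisms `L.obj x ⟶ mid` and `L.obj y ⟶ mid`. -/
structure StructCospanOb {C₁ : Type u₁} {C₂ : Type u₂} [Category.{v₁} C₁] [Category.{v₂} C₂]
    (L : C₁ ⥤ C₂) (x y : C₁) : Type (max u₂ v₂) where
  mid : C₂
  left : L.obj x ⟶ mid
  right : L.obj y ⟶ mid

/-- A morphism of structured cospans over `f : x₁ ⟶ x₂` and `g : y₁ ⟶ y₂`: a morphism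
between the middle objects making the two evident squares commute. -/
structure StructCospanMor {C₁ : Type u₁} {C₂ : Type u₂} [Category.{v₁} C₁] [Category.{v₂} C₂]
    {L : C₁ ⥤ C₂} {x₁ y₁ x₂ y₂ : C₁}
    (s : StructCospanOb L x₁ y₁) (t : StructCospanOb L x₂ y₂)
    (f : x₁ ⟶ x₂) (g : y₁ ⟶ y₂) : Type v₂ where
  hom : s.mid ⟶ t.mid
  wl : L.map f ≫ t.left = s.left ≫ hom
  wr : L.map g ≫ t.right = s.right ≫ hom

theorem StructCospanMor.ext' {C₁ : Type u₁} {C₂ : Type u₂}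
    [Category.{v₁} C₁] [Category.{v₂} C₂]
    {L : C₁ ⥤ C₂} {x₁ y₁ x₂ y₂ : C₁}
    {s : StructCospanOb L x₁ y₁} {t : StructCospanOb L x₂ y₂}
    {f : x₁ ⟶ x₂} {g : y₁ ⟶ y₂}
    {m m' : StructCospanMor s t f g} (h : m.hom = m'.hom) : m = m' := by
  cases m; cases m'; cases h; rfl

theorem StructCospanMor.heq' {C₁ : Type u₁} {C₂ : Type u₂}
    [Category.{v₁} C₁] [Category.{v₂} C₂]
    {L : C₁ ⥤ C₂} {x₁ y₁ x₂ y₂ : C₁}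
    {s : StructCospanOb L x₁ y₁} {t : StructCospanOb L x₂ y₂}
    {f f' : x₁ ⟶ x₂} {g g' : y₁ ⟶ y₂} (hf : f = f') (hg : g = g')
    {m : StructCospanMor s t f g} {m' : StructCospanMor s t f' g'}
    (h : m.hom = m'.hom) : HEq m m' := by
  subst hf; subst hg; exact heq_of_eq (StructCospanMor.ext' h)

/-- The 2-sided displayed category `StructCospan L` over `C₁` and `C₁`, for a functor
`L : C₁ ⥤ C₂`: displayed objects over `x` and `y` are structured cospans from `x` to `y`,
and displayed morphisms over `f` and `g` are morphisms of structured cospans. -/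
def structCospanTwoSidedDispCat {C₁ : Type u₁} {C₂ : Type u₂}
    [Category.{v₁} C₁] [Category.{v₂} C₂] (L : C₁ ⥤ C₂) :
    TwoSidedDispCat.{max u₂ v₂, v₂} C₁ C₁ where
  Ob x y := StructCospanOb L x y
  Mor s t f g := StructCospanMor s t f g
  id s := ⟨𝟙 s.mid, by simp, by simp⟩
  comp m n :=
    ⟨m.hom ≫ n.hom,
      by rw [Functor.map_comp, Category.assoc, n.wl, ← Category.assoc, m.wl, Category.assoc],
      by rw [Functor.map_comp, Category.assoc, n.wr, ← Category.assoc, m.wr, Category.assoc]⟩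
  id_comp m := StructCospanMor.heq' (Category.id_comp _) (Category.id_comp _)
    (Category.id_comp _)
  comp_id m := StructCospanMor.heq' (Category.comp_id _) (Category.comp_id _)
    (Category.comp_id _)
  assoc m n k := StructCospanMor.heq' (Category.assoc _ _ _).symm (Category.assoc _ _ _).symm
    (Category.assoc _ _ _).symm

theorem StructCospanMor.hom_eq_of_heq {C₁ : Type u₁} {C₂ : Type u₂}
    [Category.{v₁} C₁] [Category.{v₂} C₂]
    {L : C₁ ⥤ C₂} {x₁ y₁ x₂ y₂ : C₁}
    {s : StructCospanOb L x₁ y₁} {t : StructCospanOb L x₂ y₂}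
    {f f' : x₁ ⟶ x₂} {g g' : y₁ ⟶ y₂} (hf : f = f') (hg : g = g')
    {m : StructCospanMor s t f g} {m' : StructCospanMor s t f' g'}
    (h : HEq m m') : m.hom = m'.hom := by
  subst hf; subst hg; exact congrArg StructCospanMor.hom (eq_of_heq h)

theorem StructCospanOb.ext' {C₁ : Type u₁} {C₂ : Type u₂}
    [Category.{v₁} C₁] [Category.{v₂} C₂]
    {L : C₁ ⥤ C₂} {x y : C₁} {s t : StructCospanOb L x y} (hm : s.mid = t.mid)
    (hl : s.left ≫ eqToHom hm = t.left) (hr : s.right ≫ eqToHom hm = t.right) : s = t := by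
  cases s; cases t
  cases hm
  simp only [eqToHom_refl, Category.comp_id] at hl hr
  cases hl; cases hr; rfl

theorem structCospan_isoStructure_subsingleton {C₁ : Type u₁} {C₂ : Type u₂}
    [Category.{v₁} C₁] [Category.{v₂} C₂] {L : C₁ ⥤ C₂}
    {x₁ y₁ x₂ y₂ : C₁} (f₁ : x₁ ≅ y₁) (f₂ : x₂ ≅ y₂)
    {s : (structCospanTwoSidedDispCat L).Ob x₁ x₂}
    {t : (structCospanTwoSidedDispCat L).Ob y₁ y₂}
    (f : (structCospanTwoSidedDispCat L).Mor s t f₁.hom f₂.hom)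
    (a b : (structCospanTwoSidedDispCat L).IsoStructure f₁ f₂ f) : a = b := by
  have hinv : a.inv = b.inv := by
    apply StructCospanMor.ext'
    have ha : f.hom ≫ a.inv.hom = 𝟙 s.mid :=
      StructCospanMor.hom_eq_of_heq f₁.hom_inv_id f₂.hom_inv_id a.hom_inv
    have hb : a.inv.hom ≫ f.hom = 𝟙 t.mid :=
      StructCospanMor.hom_eq_of_heq f₁.inv_hom_id f₂.inv_hom_id a.inv_hom
    have hb' : f.hom ≫ b.inv.hom = 𝟙 s.mid :=
      StructCospanMor.hom_eq_of_heq f₁.hom_inv_id f₂.hom_inv_id b.hom_inv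
    calc a.inv.hom = a.inv.hom ≫ (f.hom ≫ b.inv.hom) := by rw [hb']; simp
      _ = (a.inv.hom ≫ f.hom) ≫ b.inv.hom := by simp
      _ = b.inv.hom := by rw [hb]; simp
  cases a; cases b
  cases hinv
  rfl

/-- For every functor `L : C₁ ⥤ C₂` between univalent categories, the
2-sided displayed category `StructCospan L` of structured cospans is univalent. -/
theorem struct_cospans_twosided_disp_cat_is_univalent
    {C₁ : Type u₁} {C₂ : Type u₂} [Category.{v₁} C₁] [Category.{v₂} C₂] (L : C₁ ⥤ C₂)
    (h₁ : IsUnivalentCat C₁) (h₂ : IsUnivalentCat C₂) :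
    (structCospanTwoSidedDispCat L).IsUnivalent := by
  intro x₁ x₂ x y
  constructor
  · intro p p' _
    exact Subsingleton.elim p p'
  · rintro ⟨f, iso⟩
    -- the middle morphism is an isomorphism in C₂
    have hhi : f.hom ≫ iso.inv.hom = 𝟙 x.mid :=
      StructCospanMor.hom_eq_of_heq (Category.id_comp _) (Category.id_comp _) iso.hom_inv
    have hih : iso.inv.hom ≫ f.hom = 𝟙 y.mid :=
      StructCospanMor.hom_eq_of_heq (Category.id_comp _) (Category.id_comp _) iso.inv_hom
    obtain ⟨q, hq⟩ := (h₂ x.mid y.mid).2 ⟨f.hom, iso.inv.hom, hhi, hih⟩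
    have hq' : eqToHom q = f.hom := congrArg Iso.hom hq
    have hl : x.left ≫ eqToHom q = y.left := by
      rw [hq']
      have := f.wl
      simpa using this.symm
    have hr : x.right ≫ eqToHom q = y.right := by
      rw [hq']
      have := f.wr
      simpa using this.symm
    have p : x = y := StructCospanOb.ext' q hl hr
    refine ⟨p, ?_⟩
    subst p
    have hq0 : q = rfl := rfl
    have hfhom : (𝟙 x.mid : x.mid ⟶ x.mid) = f.hom := by
      rw [← hq']; rw [hq0]; simp
    have hf : (structCospanTwoSidedDispCat L).id x = f :=
      StructCospanMor.ext' hfhom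
    show (⟨(structCospanTwoSidedDispCat L).id x,
      (structCospanTwoSidedDispCat L).idIso x⟩ :
      (structCospanTwoSidedDispCat L).DispIso x x) = ⟨f, iso⟩
    subst hf
    exact congrArg _ (structCospan_isoStructure_subsingleton _ _ _ _ _)
end

section
/- For every univalent category C with chosen binary products, the 2-sided displayed category Lens(C) over C and C — whose displayed objects over s and v are lenses from s to v, and whose displayed morphisms from a lens l₁ (from s₁ to v₁) to a lens l₂ (from s₂ to v₂) over f₁ : s₁ → s₂ and f₂ : v₁ → v₂ are proofs that get(l₁)·f₂ = f₁·get(l₂) and put(l₁)·f₁ = (f₂ × f₁)·put(l₂) — is a univalent 2-sided displayed category. -/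
open CategoryTheory

universe w w' v v₁ v₂ v₃ v₄ u u₁ u₂ u₃ u₄

/-- Two elements of (possibly different) lifted propositions are dependently equal. -/
theorem plift_heq {p q : Prop} (a : PLift p) (b : PLift q) : HEq a b := by
  have hpq : p = q := propext ⟨fun _ => b.down, fun _ => a.down⟩
  subst hpq
  exact heq_of_eq (Subsingleton.elim a b)

/-- A choice of binary products in a category `C`. -/
structure ChosenBinaryProducts (C : Type u) [Category.{v} C] where
  prod : C → C → C
  fst : ∀ x y : C, prod x y ⟶ x
  snd : ∀ x y : C, prod x y ⟶ y
  lift : ∀ {x y z : C}, (z ⟶ x) → (z ⟶ y) → (z ⟶ prod x y)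
  lift_fst : ∀ {x y z : C} (f : z ⟶ x) (g : z ⟶ y), lift f g ≫ fst x y = f
  lift_snd : ∀ {x y z : C} (f : z ⟶ x) (g : z ⟶ y), lift f g ≫ snd x y = g
  hom_ext : ∀ {x y z : C} (f g : z ⟶ prod x y),
    f ≫ fst x y = g ≫ fst x y → f ≫ snd x y = g ≫ snd x y → f = g

namespace ChosenBinaryProducts

variable {C : Type u} [Category.{v} C] (P : ChosenBinaryProducts C)

attribute [simp] lift_fst lift_snd

theorem lift_fst_assoc {x y z w : C} (f : z ⟶ x) (g : z ⟶ y) (h : x ⟶ w) :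
    P.lift f g ≫ P.fst x y ≫ h = f ≫ h := by
  rw [← Category.assoc, P.lift_fst]

theorem lift_snd_assoc {x y z w : C} (f : z ⟶ x) (g : z ⟶ y) (h : y ⟶ w) :
    P.lift f g ≫ P.snd x y ≫ h = g ≫ h := by
  rw [← Category.assoc, P.lift_snd]

/-- The functorial action `f × g` on chosen binary products. -/
def prodMap {x x' y y' : C} (f : x ⟶ x') (g : y ⟶ y') : P.prod x y ⟶ P.prod x' y' :=
  P.lift (P.fst x y ≫ f) (P.snd x y ≫ g)

/-- A lens from `s` to `v`: a get-morphism `s ⟶ v` and a put-morphism `v × s ⟶ s`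
satisfying the three lens laws. -/
structure Lens (s v : C) : Type v where
  get : s ⟶ v
  put : P.prod v s ⟶ s
  put_get : put ≫ get = P.fst v s
  get_put : P.lift get (𝟙 s) ≫ put = 𝟙 s
  put_put : P.prodMap (𝟙 v) put ≫ put =
    P.lift (P.fst v (P.prod v s)) (P.snd v (P.prod v s) ≫ P.snd v s) ≫ put

end ChosenBinaryProducts

/-- The 2-sided displayed category `Lens C` over `C` and `C`, for a category `C` with
chosen binary products: displayed objects over `s` and `v` are lenses from `s` to `v`,
and displayed morphisms from `l₁` to `l₂` over `f₁ : s₁ ⟶ s₂` and `f₂ : v₁ ⟶ v₂` are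
proofs that `get l₁ ≫ f₂ = f₁ ≫ get l₂` and `put l₁ ≫ f₁ = (f₂ × f₁) ≫ put l₂`. -/
def lensTwoSidedDispCat (C : Type u) [Category.{v} C] (P : ChosenBinaryProducts C) :
    TwoSidedDispCat.{v, 0} C C where
  Ob s v := P.Lens s v
  Mor l₁ l₂ f₁ f₂ :=
    PLift (l₁.get ≫ f₂ = f₁ ≫ l₂.get ∧ l₁.put ≫ f₁ = P.prodMap f₂ f₁ ≫ l₂.put)
  id := fun {s v} l => ⟨by
    refine ⟨by simp, ?_⟩
    have h : P.prodMap (𝟙 v) (𝟙 s) = 𝟙 (P.prod v s) :=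
      P.hom_ext _ _ (by simp [ChosenBinaryProducts.prodMap])
        (by simp [ChosenBinaryProducts.prodMap])
    rw [h]; simp⟩
  comp := fun {s₁ s₂ s₃ v₁ v₂ v₃ l₁ l₂ l₃ f₁ f₂ g₁ g₂} p q => ⟨by
    obtain ⟨pg, pp⟩ := p.down
    obtain ⟨qg, qp⟩ := q.down
    refine ⟨by rw [← Category.assoc, pg, Category.assoc, qg, Category.assoc], ?_⟩
    have hmap : P.prodMap (f₂ ≫ g₂) (f₁ ≫ g₁) = P.prodMap f₂ f₁ ≫ P.prodMap g₂ g₁ := by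
      refine P.hom_ext _ _ ?_ ?_ <;>
        simp only [ChosenBinaryProducts.prodMap, Category.assoc, P.lift_fst, P.lift_snd,
          P.lift_fst_assoc, P.lift_snd_assoc]
    rw [← Category.assoc, pp, Category.assoc, qp, hmap, Category.assoc]⟩
  id_comp _ := plift_heq _ _
  comp_id _ := plift_heq _ _
  assoc _ _ _ := plift_heq _ _

/-- Displayed morphisms in the lens displayed category are unique. -/
theorem lens_mor_eq {C : Type u} [Category.{v} C] {P : ChosenBinaryProducts C}
    {s₁ s₂ v₁ v₂ : C} {l₁ : P.Lens s₁ v₁} {l₂ : P.Lens s₂ v₂}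
    {f₁ : s₁ ⟶ s₂} {f₂ : v₁ ⟶ v₂}
    (a b : (lensTwoSidedDispCat C P).Mor l₁ l₂ f₁ f₂) : a = b := by
  cases a; cases b; rfl

/-- For every univalent category `C` with chosen binary products, the
2-sided displayed category `Lens C` of lenses is univalent. -/
theorem lenses_twosided_disp_cat_is_univalent (C : Type u) [Category.{v} C]
    (P : ChosenBinaryProducts C) (hC : IsUnivalentCat C) :
    (lensTwoSidedDispCat C P).IsUnivalent := by
  intro s v x y
  constructor
  · intro p q _
    exact Subsingleton.elim p q
  · intro i
    obtain ⟨hg, hp⟩ := i.1.down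
    have hmap : P.prodMap (𝟙 v) (𝟙 s) = 𝟙 (P.prod v s) :=
      P.hom_ext _ _ (by simp [ChosenBinaryProducts.prodMap])
        (by simp [ChosenBinaryProducts.prodMap])
    have hget : x.get = y.get := by simpa using hg
    have hput : x.put = y.put := by
      rw [hmap] at hp; simpa using hp
    have p : x = y := by
      cases x; cases y
      simp_all
      rfl
    refine ⟨p, ?_⟩
    obtain ⟨i₁, i₂⟩ := i
    obtain ⟨inv, hi, ih⟩ := i₂
    have h1 : ((lensTwoSidedDispCat C P).idToDispIso x y p).1 = i₁ :=
      lens_mor_eq _ _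
    refine Sigma.ext h1 ?_
    subst p
    obtain ⟨j₁, j₂⟩ := (lensTwoSidedDispCat C P).idToDispIso x x rfl
    cases h1
    obtain ⟨inv', hi', ih'⟩ := j₂
    apply heq_of_eq
    have : inv' = inv := lens_mor_eq _ _
    subst this
    rfl
end
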